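/- Gurvits' capacity theorem: let p be a homogeneous polynomial of degree n in n variables x_1,…,x_n with nonnegative real coefficients that is stable, and define its capacity Cap(p) := inf { p(x_1,…,x_n)/(x_1⋯x_n) : x_1 > 0, …, x_n > 0 }. Then the coefficient of the monomial x_1 x_2 ⋯ x_n in p (equivalently, the mixed partial derivative ∂^n p/∂x_1⋯∂x_n evaluated at 0) is at least Cap(p) · n!/n^n. -/

import Mathlib

/-!
Induction on `n`, peeling off the variable `x₀`. Write `q` for the coefficient of `x₀` in `p`,
that is `∂p/∂x₀` at `x₀ = 0`; it is homogeneous of degree `n - 1` and carries the coefficient of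
`x₀ ⋯ xₙ₋₁`.

For fixed `x > 0` the slice `f(t) = p(t, x)` is real-rooted: by homogeneity
`p(t, x) = (1 - t)ⁿ p(s - 1, s x)` with `s = (1 - t)⁻¹`, and `s` lies in the upper half-plane
together with `t`. A real-rooted `f` with nonnegative coefficients, degree `≤ k + 1` and
`f(t) ≥ L t` on `t > 0` has `f'(0) ≥ L (k/(k+1))ᵏ`: writing `f(t) = f(0) ∏ (1 + t xᵢ)`, AM-GM bounds
`f(t)` by `f(0) (1 + t f'(0)/(f(0)(k+1)))^(k+1)`, evaluated at the optimal `t`. Applied with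
`L = Cap(p) ∏ xⱼ` this gives `Cap(q) ≥ (k/(k+1))ᵏ Cap(p)`, and `∏ₖ (k/(k+1))ᵏ = n!/nⁿ`.

The induction needs `q` to be stable (or zero). It is the pointwise limit, as `ε → 0⁺`, of
`ε p(iε, ·) + ∂₀p(iε, ·)`, which is stable because `u + u'/ε` has no zeros in the upper half-plane
when `u` has none. Stability of limits is a Hurwitz argument: a stable `Q` of degree `≤ B`
satisfies `‖Q σ‖ ≤ (∏ⱼ (1 + ‖σⱼ - τⱼ‖ / Im τⱼ))^B ‖Q τ‖` on the upper half-plane (one variable at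
a time, comparing `‖σ - ρ‖` with `‖τ - ρ‖` for every root `ρ`, which has `Im ρ ≤ 0`). This bound
survives pointwise limits, so a limit vanishing at one point of the upper half-plane vanishes on
all of it, hence is zero.
-/

open MvPolynomial Filter Topology
open scoped Polynomial

noncomputable def harnackFactor (τ σ : ℂ) : ℝ := 1 + ‖σ - τ‖ / τ.im

theorem one_le_harnackFactor {τ : ℂ} (hτ : 0 < τ.im) (σ : ℂ) : 1 ≤ harnackFactor τ σ :=
  le_add_of_nonneg_right (by positivity)

theorem norm_sub_le_harnackFactor_mul {τ ρ : ℂ} (hτ : 0 < τ.im) (hρ : ρ.im ≤ 0) (σ : ℂ) :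
    ‖σ - ρ‖ ≤ harnackFactor τ σ * ‖τ - ρ‖ := by
  have him : τ.im ≤ ‖τ - ρ‖ :=
    calc τ.im ≤ (τ - ρ).im := by rw [Complex.sub_im]; linarith
      _ ≤ ‖τ - ρ‖ := (le_abs_self _).trans (Complex.abs_im_le_norm _)
  calc ‖σ - ρ‖ ≤ ‖σ - τ‖ + ‖τ - ρ‖ := norm_sub_le_norm_sub_add_norm_sub σ τ ρ
    _ ≤ ‖σ - τ‖ / τ.im * ‖τ - ρ‖ + ‖τ - ρ‖ := by
        gcongr
        rw [div_mul_eq_mul_div, le_div_iff₀ hτ]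
        exact mul_le_mul_of_nonneg_left him (norm_nonneg _)
    _ = harnackFactor τ σ * ‖τ - ρ‖ := by rw [harnackFactor]; ring

theorem infinite_setOf_im_pos : {z : ℂ | 0 < z.im}.Infinite :=
  infinite_of_mem_nhds Complex.I <|
    (isOpen_lt continuous_const Complex.continuous_im).mem_nhds (by simp)

theorem im_cons_pos {k : ℕ} {t : ℂ} {w : Fin k → ℂ} (ht : 0 < t.im) (hw : ∀ j, 0 < (w j).im) :
    ∀ j, 0 < ((Fin.cons t w : Fin (k + 1) → ℂ) j).im :=
  Fin.cases ht hw

theorem nonempty_setOf_forall_pos {ι : Type*} : {x : ι → ℝ | ∀ j, 0 < x j}.Nonempty :=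
  ⟨fun _ => 1, fun _ => one_pos⟩

namespace Polynomial

theorem im_nonpos_of_mem_roots {u : ℂ[X]} (hu : ∀ z : ℂ, 0 < z.im → u.eval z ≠ 0) {ρ : ℂ}
    (hρ : ρ ∈ u.roots) : ρ.im ≤ 0 :=
  not_lt.mp fun h => hu ρ h (mem_roots'.mp hρ).2

theorem norm_eval_le_harnackFactor_pow_mul {u : ℂ[X]} (hu : ∀ z : ℂ, 0 < z.im → u.eval z ≠ 0)
    {B : ℕ} (hB : u.natDegree ≤ B) {τ : ℂ} (hτ : 0 < τ.im) (σ : ℂ) :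
    ‖u.eval σ‖ ≤ harnackFactor τ σ ^ B * ‖u.eval τ‖ := by
  have hsplit : u.Splits := IsAlgClosed.splits u
  have hK := one_le_harnackFactor hτ σ
  have hnorm : ∀ x, ‖(u.roots.map (x - ·)).prod‖ = (u.roots.map fun ρ => ‖x - ρ‖).prod :=
    fun x => by rw [← normHom_apply, map_multiset_prod, Multiset.map_map]; rfl
  simp only [hsplit.eval_eq_prod_roots, norm_mul, hnorm]
  calc ‖u.leadingCoeff‖ * (u.roots.map fun ρ => ‖σ - ρ‖).prod
      ≤ ‖u.leadingCoeff‖ * (u.roots.map fun ρ => harnackFactor τ σ * ‖τ - ρ‖).prod := by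
        gcongr
        exact Multiset.prod_map_le_prod_map₀ _ _ (fun _ _ => norm_nonneg _)
          fun ρ hρ => norm_sub_le_harnackFactor_mul hτ (im_nonpos_of_mem_roots hu hρ) σ
    _ = harnackFactor τ σ ^ u.roots.card * (‖u.leadingCoeff‖ *
          (u.roots.map fun ρ => ‖τ - ρ‖).prod) := by
        rw [Multiset.prod_map_mul, Multiset.map_const', Multiset.prod_replicate]; ring
    _ ≤ harnackFactor τ σ ^ B * (‖u.leadingCoeff‖ * (u.roots.map fun ρ => ‖τ - ρ‖).prod) := by
        gcongr
        · exact mul_nonneg (norm_nonneg _) (Multiset.prod_map_nonneg fun _ _ => norm_nonneg _)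
        exact (card_roots' u).trans hB

theorem mul_eval_add_eval_derivative_ne_zero {u : ℂ[X]}
    (hu : ∀ z : ℂ, 0 < z.im → u.eval z ≠ 0) {c : ℝ} (hc : 0 < c) {τ : ℂ} (hτ : 0 < τ.im) :
    c * u.eval τ + u.derivative.eval τ ≠ 0 := by
  rw [(IsAlgClosed.splits u).eval_derivative_eq_eval_mul_sum (hu τ hτ), mul_comm (c : ℂ),
    ← mul_add]
  refine mul_ne_zero (hu τ hτ) fun h => ?_
  have him := congrArg Complex.im h
  rw [Complex.add_im, Complex.ofReal_im, zero_add, Complex.zero_im,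
    ← Complex.coe_imAddGroupHom, map_multiset_sum, Multiset.map_map] at him
  rcases eq_or_ne u.roots 0 with h0 | h0
  · simp [h0, hc.ne'] at h
  · refine (Multiset.sum_lt_sum_of_nonempty (g := fun _ => (0 : ℝ)) h0 fun ρ hρ => ?_).ne
      (by simpa using him)
    have hτρ : ρ.im < τ.im := by linarith [im_nonpos_of_mem_roots hu hρ]
    refine div_neg_of_neg_of_pos (by linarith) (Complex.normSq_pos.mpr fun h0 => ?_)
    simp [sub_eq_zero.mp h0] at hτρ

theorem splits_of_aeval_ne_zero {f : ℝ[X]} (hf : ∀ z : ℂ, 0 < z.im → aeval z f ≠ 0) :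
    f.Splits := by
  refine Splits.of_splits_map (algebraMap ℝ ℂ) (IsAlgClosed.splits _) fun ρ hρ => ?_
  have hroot : aeval ρ f = 0 := by
    rw [aeval_def, ← eval_map]; exact (mem_roots'.mp hρ).2
  have him : ρ.im = 0 := by
    rcases lt_trichotomy ρ.im 0 with h | h | h
    · refine absurd ?_ (hf (starRingEnd ℂ ρ) (by simpa using h))
      rw [aeval_conj, hroot, map_zero]
    · exact h
    · exact absurd hroot (hf ρ h)
  exact ⟨ρ.re, Complex.ext (by simp) (by simp [him])⟩

theorem coeff_zero_le_eval {f : ℝ[X]} (hf : ∀ j, 0 ≤ f.coeff j) {t : ℝ} (ht : 0 ≤ t) :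
    f.coeff 0 ≤ f.eval t := by
  rw [eval_eq_sum_range]
  simpa using Finset.single_le_sum (f := fun i => f.coeff i * t ^ i)
    (fun i _ => mul_nonneg (hf i) (pow_nonneg ht i)) (Finset.mem_range.mpr (Nat.succ_pos _))

theorem le_coeff_one_of_mul_le_eval {f : ℝ[X]} (hf : f.coeff 0 = 0) {L : ℝ}
    (hL : ∀ t > 0, L * t ≤ f.eval t) : L ≤ f.coeff 1 := by
  have hdivX : ∀ t > 0, L ≤ f.divX.eval t := fun t ht => by
    have := hL t ht
    rw [← X_mul_divX_add f, hf, map_zero, add_zero, eval_mul, eval_X, mul_comm] at this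
    exact le_of_mul_le_mul_left this ht
  rw [← coeff_divX, coeff_zero_eq_eval_zero]
  exact ge_of_tendsto
    (f.divX.continuous.tendsto 0 |>.mono_left (nhdsWithin_le_nhds (s := Set.Ioi 0)))
    (eventually_nhdsWithin_of_forall fun t (ht : 0 < t) => hdivX t ht)

end Polynomial

theorem Multiset.prod_le_sum_div_card_pow {s : Multiset ℝ} (hs : ∀ x ∈ s, 0 ≤ x) :
    s.prod ≤ (s.sum / card s) ^ card s := by
  rcases Nat.eq_zero_or_pos (card s) with h | h
  · simp [Multiset.card_eq_zero.mp h]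
  have hN : (0 : ℝ) < card s := by exact_mod_cast h
  have hgm := Real.geom_mean_le_arith_mean s.toEnumFinset (fun _ => 1) Prod.fst
    (fun _ _ => zero_le_one) (by simpa using h)
    fun x hx => hs _ (Multiset.mem_of_mem_toEnumFinset hx)
  simp only [Real.rpow_one, one_mul, Finset.sum_const, Multiset.card_toEnumFinset, nsmul_eq_mul,
    mul_one] at hgm
  rw [Finset.prod_eq_multiset_prod, Finset.sum_eq_multiset_sum, Multiset.map_toEnumFinset_fst,
    Real.rpow_inv_le_iff_of_pos (Multiset.prod_nonneg hs)
      (div_nonneg (Multiset.sum_nonneg hs) hN.le) hN, Real.rpow_natCast] at hgm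
  exact hgm

theorem Multiset.prod_map_one_add_le {s : Multiset ℝ} (hs : ∀ x ∈ s, 0 ≤ x) {m : ℕ}
    (hm : card s ≤ m) (hm0 : 0 < m) : (s.map (1 + ·)).prod ≤ (1 + s.sum / m) ^ m := by
  set u := s.map (1 + ·) + Multiset.replicate (m - card s) 1
  have hu : ∀ x ∈ u, 0 ≤ x := by
    simp only [u, Multiset.mem_add, Multiset.mem_map, Multiset.mem_replicate]
    rintro x (⟨y, hy, rfl⟩ | ⟨-, rfl⟩)
    · linarith [hs y hy]
    · exact zero_le_one
  have hcard : card u = m := by simp [u]; omega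
  have hsum : u.sum = m + s.sum := by
    have := Multiset.sum_map_add (m := s) (f := fun _ => (1 : ℝ)) (g := id)
    simp only [id] at this
    simp [u, this, Nat.cast_sub hm]; ring
  have hprod : u.prod = (s.map (1 + ·)).prod := by simp [u]
  have hm0' : (m : ℝ) ≠ 0 := by positivity
  calc (s.map (1 + ·)).prod = u.prod := hprod.symm
    _ ≤ (u.sum / card u) ^ card u := Multiset.prod_le_sum_div_card_pow hu
    _ = (1 + s.sum / m) ^ m := by rw [hcard, hsum, add_div, div_self hm0']

theorem mul_le_sum_of_mul_le_prod_one_add {s : Multiset ℝ} (hs : ∀ x ∈ s, 0 ≤ x) {k : ℕ}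
    (hcard : Multiset.card s ≤ k + 1) {L : ℝ}
    (hL : ∀ t > 0, L * t ≤ (s.map fun x => 1 + t * x).prod) :
    L * ((k : ℝ) / (k + 1)) ^ k ≤ s.sum := by
  have hS : 0 ≤ s.sum := Multiset.sum_nonneg hs
  rcases le_or_gt L 0 with hL0 | hL0
  · exact (mul_nonpos_of_nonpos_of_nonneg hL0 (by positivity)).trans hS
  have hbound : ∀ t > 0, L * t ≤ (1 + t * s.sum / (k + 1)) ^ (k + 1) := fun t ht => by
    have hts : ∀ x ∈ s.map (t * ·), 0 ≤ x := by
      simpa using fun x hx => mul_nonneg ht.le (hs x hx)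
    have := Multiset.prod_map_one_add_le hts (by simpa using hcard) k.succ_pos
    rw [Multiset.map_map, Multiset.sum_map_mul_left, Multiset.map_id'] at this
    exact (hL t ht).trans (by simpa [Function.comp_def] using this)
  rcases Nat.eq_zero_or_pos k with rfl | hk
  · by_contra! h
    simp only [CharP.cast_eq_zero, pow_zero, mul_one] at h
    set t := 2 / (L - s.sum)
    have ht : (L - s.sum) * t = 2 := mul_div_cancel₀ _ (sub_pos.mpr h).ne'
    have := hbound t (div_pos two_pos (sub_pos.mpr h))
    simp only [CharP.cast_eq_zero, zero_add, div_one, pow_one] at this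
    linarith
  · have hk' : (0 : ℝ) < k := by exact_mod_cast hk
    set g := ((k : ℝ) / (k + 1)) ^ k with hg
    have hg0 : 0 < g := by positivity
    -- `(k + 1) / (k S)` minimises `(1 + t S / (k + 1)) ^ (k + 1) / t`; put `L g` in place of `S`.
    have key := hbound ((k + 1) / (k * L * g)) (by positivity)
    have hLt : L * ((k + 1) / (k * L * g)) = ((k + 1) / k) ^ (k + 1) := by
      rw [hg, div_pow, pow_succ, div_pow]; field_simp
    have hRt : (k + 1) / (k * L * g) * s.sum / (k + 1) = s.sum / (k * L * g) := by
      field_simp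
    rw [hLt, hRt, pow_le_pow_iff_left₀ (by positivity) (by positivity) (by omega),
      ← sub_le_iff_le_add', div_sub_one hk'.ne', add_sub_cancel_left,
      div_le_div_iff₀ hk' (by positivity), one_mul, mul_assoc, mul_comm s.sum] at key
    exact le_of_mul_le_mul_left key hk'

namespace Polynomial

theorem mul_le_coeff_one_of_splits {f : ℝ[X]} (hsplit : f.Splits) (hf : ∀ j, 0 ≤ f.coeff j)
    {k : ℕ} (hdeg : f.natDegree ≤ k + 1) {L : ℝ} (hL : ∀ t > 0, L * t ≤ f.eval t) :
    L * ((k : ℝ) / (k + 1)) ^ k ≤ f.coeff 1 := by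
  rcases (hf 0).eq_or_lt with h0 | h0
  · have h1 := le_coeff_one_of_mul_le_eval h0.symm hL
    have hg : ((k : ℝ) / (k + 1)) ^ k ≤ 1 :=
      pow_le_one₀ (by positivity) ((div_le_one (by positivity)).mpr (by linarith))
    rcases le_or_gt L 0 with hL0 | hL0
    · exact (mul_nonpos_of_nonpos_of_nonneg hL0 (by positivity)).trans (hf 1)
    · exact (mul_le_of_le_one_right hL0.le hg).trans h1
  have hf0 : 0 < f.eval 0 := coeff_zero_eq_eval_zero f ▸ h0
  have hneg : ∀ ρ ∈ f.roots, ρ < 0 := fun ρ hρ => not_le.mp fun hρ0 =>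
    h0.not_ge ((coeff_zero_le_eval hf hρ0).trans (mem_roots'.mp hρ).2.le)
  set xs := f.roots.map fun ρ => -ρ⁻¹
  have hxs : ∀ x ∈ xs, 0 ≤ x := by
    simp only [xs, Multiset.mem_map]
    rintro _ ⟨ρ, hρ, rfl⟩
    exact neg_nonneg.mpr (inv_nonpos.mpr (hneg ρ hρ).le)
  have heval : ∀ t, f.eval t = f.eval 0 * (xs.map fun x => 1 + t * x).prod := fun t => by
    simp only [hsplit.eval_eq_prod_roots, xs, Multiset.map_map, mul_assoc,
      ← Multiset.prod_map_mul]
    congr 2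
    refine Multiset.map_congr rfl fun ρ hρ => ?_
    simp only [Function.comp_apply]
    field_simp [(hneg ρ hρ).ne]
    ring
  have hcoeff1 : f.coeff 1 = f.eval 0 * xs.sum := by
    have := hsplit.eval_derivative_eq_eval_mul_sum hf0.ne'
    simp [← coeff_zero_eq_eval_zero, coeff_derivative] at this
    simp [this, xs, Multiset.sum_map_neg, coeff_zero_eq_eval_zero]
  have hxsL := mul_le_sum_of_mul_le_prod_one_add hxs
    (by simpa [xs] using (card_roots' f).trans hdeg) (L := L / f.eval 0) fun t ht => by
      rw [div_mul_eq_mul_div, div_le_iff₀ hf0, mul_comm _ (f.eval 0), ← heval]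
      exact hL t ht
  rw [hcoeff1]
  calc L * ((k : ℝ) / (k + 1)) ^ k = f.eval 0 * (L / f.eval 0 * ((k : ℝ) / (k + 1)) ^ k) := by
        field_simp
    _ ≤ f.eval 0 * xs.sum := mul_le_mul_of_nonneg_left hxsL hf0.le

end Polynomial

namespace MvPolynomial

def IsStable {R ι : Type*} [CommSemiring R] [Algebra R ℂ] (p : MvPolynomial ι R) : Prop :=
  ∀ z : ι → ℂ, (∀ j, 0 < (z j).im) → aeval z p ≠ 0

theorem isStable_map_algebraMap_iff {R ι : Type*} [CommSemiring R] [Algebra R ℂ]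
    {Q : MvPolynomial ι R} : (map (algebraMap R ℂ) Q).IsStable ↔ Q.IsStable := by
  simp only [IsStable, aeval_map_algebraMap]

theorem eval_nonneg_of_coeff_nonneg {ι : Type*} {p : MvPolynomial ι ℝ} (hp : ∀ m, 0 ≤ p.coeff m)
    {x : ι → ℝ} (hx : ∀ j, 0 ≤ x j) : 0 ≤ eval x p := by
  rw [eval_eq]
  exact Finset.sum_nonneg fun m _ =>
    mul_nonneg (hp m) (Finset.prod_nonneg fun j _ => pow_nonneg (hx j) _)

theorem IsHomogeneous.aeval_smul {ι R S : Type*} [Fintype ι] [CommSemiring R] [CommSemiring S]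
    [Algebra R S] {p : MvPolynomial ι R} {n : ℕ} (hp : p.IsHomogeneous n) (c : S) (z : ι → S) :
    MvPolynomial.aeval (c • z) p = c ^ n * MvPolynomial.aeval z p := by
  simp only [aeval_def, eval₂_eq', Finset.mul_sum]
  refine Finset.sum_congr rfl fun d hd => ?_
  have hdeg : ∑ i, d i = n := by
    rw [← Finsupp.degree_eq_sum, ← hp (mem_support_iff.mp hd), Finsupp.degree_eq_weight_one]
    rfl
  simp only [Pi.smul_apply, smul_eq_mul, mul_pow, Finset.prod_mul_distrib,
    Finset.prod_pow_eq_pow_sum, hdeg]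
  ring

theorem eval_polynomial_eval_C {σ R : Type*} [CommSemiring R] (G : (MvPolynomial σ R)[X]) (a : R)
    (w : σ → R) : eval w (G.eval (C a)) = (G.map (eval w)).eval a := by
  rw [Polynomial.eval_map, ← Polynomial.eval₂_at_apply (eval w) (C a), eval_C]

theorem totalDegree_polynomial_eval_C_le {σ R : Type*} [CommSemiring R]
    (G : (MvPolynomial σ R)[X]) (a : R) {B : ℕ} (hB : ∀ j, (G.coeff j).totalDegree ≤ B) :
    (G.eval (C a)).totalDegree ≤ B := by
  rw [Polynomial.eval_eq_sum_range]
  refine totalDegree_finsetSum_le fun j _ => (totalDegree_mul _ _).trans ?_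
  rw [← C_pow, totalDegree_C, add_zero]
  exact hB j

theorem totalDegree_coeff_C_mul_add_derivative_le {σ R : Type*} [CommSemiring R]
    {G : (MvPolynomial σ R)[X]} {B : ℕ} (hG : ∀ j, (G.coeff j).totalDegree ≤ B) (c : R) (j : ℕ) :
    ((Polynomial.C (C c) * G + Polynomial.derivative G).coeff j).totalDegree ≤ B := by
  rw [Polynomial.coeff_add, Polynomial.coeff_C_mul, Polynomial.coeff_derivative]
  refine (totalDegree_add _ _).trans (max_le ?_ ?_)
  · exact (totalDegree_mul _ _).trans (by rw [totalDegree_C, zero_add]; exact hG j)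
  · refine (totalDegree_mul _ _).trans ?_
    rw [← Nat.cast_succ, ← map_natCast C, totalDegree_C, add_zero]
    exact hG _

section FinSuccEquiv

variable {R : Type*} [CommSemiring R] {k : ℕ}

theorem totalDegree_coeff_finSuccEquiv_le (Q : MvPolynomial (Fin (k + 1)) R) (j : ℕ) :
    ((finSuccEquiv R k Q).coeff j).totalDegree ≤ Q.totalDegree := by
  rcases eq_or_ne ((finSuccEquiv R k Q).coeff j) 0 with h | h
  · simp [h]
  · have := totalDegree_coeff_finSuccEquiv_add_le Q j h
    omega

theorem natDegree_map_finSuccEquiv_le {S : Type*} [Semiring S] (φ : MvPolynomial (Fin k) R →+* S)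
    (Q : MvPolynomial (Fin (k + 1)) R) :
    ((finSuccEquiv R k Q).map φ).natDegree ≤ Q.totalDegree :=
  Polynomial.natDegree_map_le.trans
    ((natDegree_finSuccEquiv Q).trans_le (degreeOf_le_totalDegree Q 0))

theorem eval_polynomial_eval_C_finSuccEquiv (Q : MvPolynomial (Fin (k + 1)) R) (a : R)
    (w : Fin k → R) : eval w ((finSuccEquiv R k Q).eval (C a)) = eval (Fin.cons a w) Q := by
  rw [eval_polynomial_eval_finSuccEquiv, eval_C]
  rfl

end FinSuccEquiv

theorem map_coeff_finSuccEquiv {R S : Type*} [CommSemiring R] [CommSemiring S] (φ : R →+* S)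
    {k : ℕ} (Q : MvPolynomial (Fin (k + 1)) R) (j : ℕ) :
    map φ ((finSuccEquiv R k Q).coeff j) = (finSuccEquiv S k (map φ Q)).coeff j := by
  ext m
  rw [coeff_map, finSuccEquiv_coeff_coeff, finSuccEquiv_coeff_coeff, coeff_map]

theorem aeval_cons_eq_aeval_map_finSuccEquiv {R S : Type*} [CommSemiring R] [CommSemiring S]
    [Algebra R S] {k : ℕ} (p : MvPolynomial (Fin (k + 1)) R) (t : S) (x : Fin k → R) :
    aeval (Fin.cons t (algebraMap R S ∘ x)) p =
      Polynomial.aeval t ((finSuccEquiv R k p).map (eval x)) := by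
  induction p using MvPolynomial.induction_on with
  | C a => simp [finSuccEquiv_apply]
  | add p q hp hq => simp [hp, hq]
  | mul_X p i hp =>
    cases i using Fin.cases with
    | zero => simp [hp, finSuccEquiv_X_zero]
    | succ i => simp [hp, finSuccEquiv_X_succ]

theorem IsStable.norm_eval_le {k : ℕ} {Q : MvPolynomial (Fin k) ℂ} (hQ : Q.IsStable) {B : ℕ}
    (hB : Q.totalDegree ≤ B) {τ σ : Fin k → ℂ} (hτ : ∀ j, 0 < (τ j).im)
    (hσ : ∀ j, 0 < (σ j).im) :
    ‖eval σ Q‖ ≤ (∏ j, harnackFactor (τ j) (σ j)) ^ B * ‖eval τ Q‖ := by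
  induction k with
  | zero => simp [Subsingleton.elim σ τ]
  | succ k ih =>
    set F := finSuccEquiv ℂ k Q
    have hR : (F.eval (C (σ 0))).IsStable := fun w hw => by
      rw [aeval_eq_eval, eval_polynomial_eval_C_finSuccEquiv]
      exact hQ _ (im_cons_pos (hσ 0) hw)
    have hRB : (F.eval (C (σ 0))).totalDegree ≤ B := totalDegree_polynomial_eval_C_le _ _
      fun j => (totalDegree_coeff_finSuccEquiv_le Q j).trans hB
    have hslice := ih hR hRB (fun j => hτ j.succ) (fun j => hσ j.succ)
    set u := F.map (eval (Fin.tail τ))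
    have hu : ∀ t : ℂ, u.eval t = eval (Fin.cons t (Fin.tail τ)) Q := fun t =>
      (eval_eq_eval_mv_eval' _ _ _).symm
    have hline := Polynomial.norm_eval_le_harnackFactor_pow_mul
      (fun t ht => by rw [hu]; exact hQ _ (im_cons_pos ht fun j => hτ j.succ))
      ((natDegree_map_finSuccEquiv_le _ Q).trans hB) (hτ 0) (σ 0)
    rw [hu, hu, Fin.cons_self_tail, ← eval_polynomial_eval_C_finSuccEquiv] at hline
    have hσQ : eval σ Q = eval (Fin.tail σ) (F.eval (C (σ 0))) := by
      rw [eval_polynomial_eval_C_finSuccEquiv, Fin.cons_self_tail]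
    rw [hσQ, Fin.prod_univ_succ, mul_pow]
    calc _ ≤ _ := hslice
      _ ≤ (∏ j : Fin k, harnackFactor (τ j.succ) (σ j.succ)) ^ B *
            (harnackFactor (τ 0) (σ 0) ^ B * ‖eval τ Q‖) := by
          gcongr
          · exact pow_nonneg (Finset.prod_nonneg fun j _ =>
              zero_le_one.trans (one_le_harnackFactor (hτ j.succ) _)) B
          · exact hline
      _ = _ := by ring

theorem eq_zero_or_isStable_of_tendsto {k B : ℕ} {ι : Type*} {l : Filter ι} [l.NeBot]
    {V : ι → MvPolynomial (Fin k) ℂ} (hV : ∀ᶠ i in l, (V i).IsStable ∧ (V i).totalDegree ≤ B)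
    {P : MvPolynomial (Fin k) ℂ} (hP : ∀ w, Tendsto (fun i => eval w (V i)) l (𝓝 (eval w P))) :
    P = 0 ∨ P.IsStable := by
  refine or_iff_not_imp_right.mpr fun hPs => ?_
  obtain ⟨τ, hτ, hτP⟩ : ∃ τ : Fin k → ℂ, (∀ j, 0 < (τ j).im) ∧ eval τ P = 0 := by
    simpa [IsStable] using hPs
  refine funext_set (fun _ => {z : ℂ | 0 < z.im}) (fun _ => infinite_setOf_im_pos)
    fun σ hσ => ?_
  have hσ' : ∀ j, 0 < (σ j).im := fun j => hσ j trivial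
  have hle : ‖eval σ P‖ ≤ (∏ j, harnackFactor (τ j) (σ j)) ^ B * ‖eval τ P‖ :=
    le_of_tendsto_of_tendsto (hP σ).norm ((hP τ).norm.const_mul _)
      (hV.mono fun i hi => hi.1.norm_eval_le hi.2 hτ hσ')
  rw [hτP, norm_zero, mul_zero, norm_le_zero_iff] at hle
  rw [hle, map_zero]

theorem IsStable.coeff_one_finSuccEquiv {K : Type*} [Field K] [Algebra K ℂ] {k : ℕ}
    {Q : MvPolynomial (Fin (k + 1)) K} (hQ : Q.IsStable) :
    (finSuccEquiv K k Q).coeff 1 = 0 ∨ ((finSuccEquiv K k Q).coeff 1).IsStable := by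
  rw [← (map_injective _ (algebraMap K ℂ).injective).eq_iff' (map_zero _),
    ← isStable_map_algebraMap_iff, map_coeff_finSuccEquiv]
  set Qc := map (algebraMap K ℂ) Q
  have hQc : Qc.IsStable := isStable_map_algebraMap_iff.mpr hQ
  set F := finSuccEquiv ℂ k Qc
  set V : ℝ → MvPolynomial (Fin k) ℂ :=
    fun ε => (Polynomial.C (C (ε : ℂ)) * F + Polynomial.derivative F).eval (C (ε * Complex.I))
  have hV : ∀ ε w, eval w (V ε) = ε * (F.map (eval w)).eval (ε * Complex.I) +
      (F.map (eval w)).derivative.eval (ε * Complex.I) := fun ε w => by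
    rw [eval_polynomial_eval_C, Polynomial.map_add, Polynomial.map_mul, Polynomial.map_C,
      Polynomial.eval_add, Polynomial.eval_mul, Polynomial.eval_C, eval_C,
      Polynomial.derivative_map]
  refine eq_zero_or_isStable_of_tendsto (l := 𝓝[>] 0) (V := V) (B := Qc.totalDegree) ?_ fun w => ?_
  · filter_upwards [self_mem_nhdsWithin] with ε (hε : 0 < ε)
    refine ⟨fun w hw => ?_, totalDegree_polynomial_eval_C_le _ _
      (totalDegree_coeff_C_mul_add_derivative_le (totalDegree_coeff_finSuccEquiv_le Qc) _)⟩
    rw [aeval_eq_eval, hV]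
    refine Polynomial.mul_eval_add_eval_derivative_ne_zero (fun t ht => ?_) hε (by simpa)
    rw [← eval_eq_eval_mv_eval']
    exact hQc _ (im_cons_pos ht hw)
  · set u := F.map (eval w)
    have hcont : Continuous fun ε : ℝ => ε * u.eval (ε * Complex.I) +
        u.derivative.eval (ε * Complex.I) := by fun_prop
    have h0 : eval w (F.coeff 1) = (0 : ℝ) * u.eval ((0 : ℝ) * Complex.I) +
        u.derivative.eval ((0 : ℝ) * Complex.I) := by
      simp [u, ← Polynomial.coeff_zero_eq_eval_zero, Polynomial.coeff_derivative]
    simp only [hV, h0]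
    exact hcont.continuousAt.tendsto.mono_left nhdsWithin_le_nhds

theorem IsStable.splits_map_finSuccEquiv {k n : ℕ} {p : MvPolynomial (Fin (k + 1)) ℝ}
    (hs : p.IsStable) (hp : p.IsHomogeneous n) {x : Fin k → ℝ} (hx : ∀ j, 0 < x j) :
    ((finSuccEquiv ℝ k p).map (eval x)).Splits := by
  refine Polynomial.splits_of_aeval_ne_zero fun t ht => ?_
  have h1t : 1 - t ≠ 0 := fun h => by simp [← sub_eq_zero.mp h] at ht
  set s := (1 - t)⁻¹
  have hsim : 0 < s.im := by
    simpa [s, Complex.inv_im] using div_pos ht (Complex.normSq_pos.mpr h1t)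
  have hcons : (Fin.cons t (algebraMap ℝ ℂ ∘ x) : Fin (k + 1) → ℂ) =
      (1 - t) • Fin.cons (s - 1) fun j => s * x j := by
    ext j
    cases j using Fin.cases <;> simp [s, mul_sub, mul_inv_cancel_left₀ h1t, mul_inv_cancel₀ h1t]
  rw [← aeval_cons_eq_aeval_map_finSuccEquiv, hcons, hp.aeval_smul]
  refine mul_ne_zero (pow_ne_zero _ h1t) (hs _ (im_cons_pos ?_ fun j => ?_))
  · simpa using hsim
  · simpa using mul_pos hsim (hx j)

noncomputable def capacity {ι : Type*} [Fintype ι] (p : MvPolynomial ι ℝ) : ℝ :=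
  sInf ((fun x : ι → ℝ => eval x p / ∏ j, x j) '' {x | ∀ j, 0 < x j})

section Capacity

variable {ι : Type*} [Fintype ι] {p : MvPolynomial ι ℝ}

theorem capacity_le (hp : ∀ m, 0 ≤ p.coeff m) {x : ι → ℝ} (hx : ∀ j, 0 < x j) :
    capacity p ≤ eval x p / ∏ j, x j := by
  refine csInf_le ⟨0, ?_⟩ ⟨x, hx, rfl⟩
  rintro _ ⟨y, hy, rfl⟩
  exact div_nonneg (eval_nonneg_of_coeff_nonneg hp fun j => (hy j).le)
    (Finset.prod_nonneg fun j _ => (hy j).le)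

theorem le_capacity {c : ℝ} (h : ∀ x : ι → ℝ, (∀ j, 0 < x j) → c ≤ eval x p / ∏ j, x j) :
    c ≤ capacity p :=
  le_csInf (nonempty_setOf_forall_pos.image _) fun _ ⟨x, hx, hxc⟩ => hxc ▸ h x hx

theorem capacity_zero : capacity (0 : MvPolynomial ι ℝ) = 0 := by
  simp only [capacity, map_zero, zero_div]
  rw [nonempty_setOf_forall_pos.image_const, csInf_singleton]

theorem capacity_of_isEmpty [IsEmpty ι] : capacity p = p.coeff 0 := by
  have : ∀ x : ι → ℝ, eval x p / ∏ j, x j = p.coeff 0 := fun x => by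
    rw [Finset.univ_eq_empty, Finset.prod_empty, div_one, p.eq_C_of_isEmpty, eval_C, coeff_C,
      if_pos rfl]
  simp only [capacity, this]
  rw [nonempty_setOf_forall_pos.image_const, csInf_singleton]

end Capacity

theorem capacity_mul_le_capacity_coeff_one {k : ℕ} {p : MvPolynomial (Fin (k + 1)) ℝ}
    (hp : p.IsHomogeneous (k + 1)) (hcoeff : ∀ m, 0 ≤ p.coeff m) (hs : p.IsStable) :
    capacity p * ((k : ℝ) / (k + 1)) ^ k ≤ capacity ((finSuccEquiv ℝ k p).coeff 1) := by
  refine le_capacity fun x hx => ?_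
  have hprod : 0 < ∏ j, x j := Finset.prod_pos fun j _ => hx j
  set f := (finSuccEquiv ℝ k p).map (eval x)
  have hf : ∀ t, f.eval t = eval (Fin.cons t x) p := fun t => (eval_eq_eval_mv_eval' _ _ _).symm
  have hL : ∀ t > 0, capacity p * (∏ j, x j) * t ≤ f.eval t := fun t ht => by
    have := capacity_le hcoeff (x := Fin.cons t x) (Fin.cases ht hx)
    rw [Fin.prod_cons, le_div_iff₀ (mul_pos ht hprod), ← hf] at this
    linarith
  have hcoeff_f : ∀ j, 0 ≤ f.coeff j := fun j => by
    rw [Polynomial.coeff_map]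
    exact eval_nonneg_of_coeff_nonneg (fun m => by rw [finSuccEquiv_coeff_coeff]; exact hcoeff _)
      fun j => (hx j).le
  have := Polynomial.mul_le_coeff_one_of_splits (hs.splits_map_finSuccEquiv hp hx) hcoeff_f
    ((natDegree_map_finSuccEquiv_le _ p).trans hp.totalDegree_le) hL
  rw [Polynomial.coeff_map] at this
  rw [le_div_iff₀ hprod]
  linarith

theorem capacity_mul_factorial_div_pow_le_coeff {n : ℕ} {p : MvPolynomial (Fin n) ℝ}
    (hp : p.IsHomogeneous n) (hcoeff : ∀ m, 0 ≤ p.coeff m) (hs : p = 0 ∨ p.IsStable) :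
    capacity p * ((n.factorial : ℝ) / (n : ℝ) ^ n) ≤
      p.coeff (Finsupp.equivFunOnFinite.symm fun _ => 1) := by
  induction n with
  | zero => simp [capacity_of_isEmpty, Subsingleton.elim _ (0 : Fin 0 →₀ ℕ)]
  | succ k ih =>
    rcases hs with rfl | hs
    · simp [capacity_zero]
    set q := (finSuccEquiv ℝ k p).coeff 1
    have hq := ih (hp.finSuccEquiv_coeff_isHomogeneous 1 k (by ring))
      (fun m => by rw [finSuccEquiv_coeff_coeff]; exact hcoeff _) hs.coeff_one_finSuccEquiv
    have hones : (Finsupp.cons 1 (Finsupp.equivFunOnFinite.symm fun _ => 1) : Fin (k + 1) →₀ ℕ) =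
        Finsupp.equivFunOnFinite.symm fun _ => 1 := by
      ext j; cases j using Fin.cases <;> simp
    rw [finSuccEquiv_coeff_coeff, hones] at hq
    have hfact : ((k + 1).factorial : ℝ) / ((k + 1 : ℕ) : ℝ) ^ (k + 1) =
        ((k : ℝ) / (k + 1)) ^ k * ((k.factorial : ℝ) / (k : ℝ) ^ k) := by
      have : (k : ℝ) ^ k ≠ 0 := by
        rcases k.eq_zero_or_pos with rfl | hk
        · simp
        · positivity
      rw [Nat.factorial_succ, div_pow]
      push_cast
      field_simp
      ring
    calc capacity p * (((k + 1).factorial : ℝ) / ((k + 1 : ℕ) : ℝ) ^ (k + 1))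
        = capacity p * ((k : ℝ) / (k + 1)) ^ k * ((k.factorial : ℝ) / (k : ℝ) ^ k) := by
          rw [hfact, mul_assoc]
      _ ≤ capacity q * ((k.factorial : ℝ) / (k : ℝ) ^ k) := by
          gcongr
          exact capacity_mul_le_capacity_coeff_one hp hcoeff hs
      _ ≤ _ := hq

end MvPolynomial

/-- **Gurvits' capacity theorem.**
Let `p` be a stable homogeneous polynomial of degree `n` in `n` variables with
nonnegative real coefficients, and let
`Cap(p) := inf { p(x)/(x_1⋯x_n) : all x_j > 0 }`.  Then the coefficient of the
monomial `x_1⋯x_n` in `p` is at least `Cap(p) · n!/nⁿ`. -/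
theorem stmt18 (n : ℕ) (p : MvPolynomial (Fin n) ℝ) (hp : p.IsHomogeneous n)
    (hcoeff : ∀ m, 0 ≤ p.coeff m)
    (hstab : ∀ z : Fin n → ℂ, (∀ j, 0 < (z j).im) → MvPolynomial.aeval z p ≠ 0) :
    sInf ((fun x : Fin n → ℝ => MvPolynomial.eval x p / ∏ j, x j) ''
          {x | ∀ j, 0 < x j}) *
        ((n.factorial : ℝ) / (n : ℝ) ^ n) ≤
      p.coeff (Finsupp.equivFunOnFinite.symm fun _ => 1) :=
  capacity_mul_factorial_div_pow_le_coeff hp hcoeff (Or.inr hstab)
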